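/- arXiv:1309.7356 — 4 statements merged into one kernel-verified Lean document; each statement's English description precedes it below -/
import Mathlib

section
/- The convolution product of two log-concave sequences of strictly positive real numbers is log-concave. That is, if (a_i)_{i=0}^m and (b_j)_{j=0}^k are log-concave sequences of positive reals, then the sequence c_r = Σ_{i+j=r} a_i b_j, for r = 0,...,m+k, is log-concave. -/
/-!
Extend both sequences by zero to `ℤ`. A positive log-concave sequence on an interval then
satisfies `A (x - 1) * A (y + 1) ≤ A x * A y` for all `x ≤ y`: moving two indices apart never
increases the product. After shifting indices,
`c r ^ 2 - c (r - 1) * c (r + 1) = ∑ i j, (A i * A j - A (i - 1) * A (j + 1)) * B (r - i) * B (r - j)`,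
and the involution `(i, j) ↦ (j + 1, i - 1)` pairs the summands so that each pair adds up to
`(A i * A j - A (i - 1) * A (j + 1)) * (B (r - j) * B (r - i) - B (r - j - 1) * B (r - i + 1))`,
a product of two factors that are both `≥ 0` when `i ≤ j` and both `≤ 0` when `i > j`.
-/

open Finset Function

theorem Finset.sum_nonneg_of_involution {ι M : Type*} [AddCommMonoid M] [LinearOrder M]
    [IsOrderedAddMonoid M] {s : Finset ι} {f : ι → M} (σ : ι → ι) (hσ : ∀ p ∈ s, σ p ∈ s)
    (hσσ : ∀ p ∈ s, σ (σ p) = p) (h : ∀ p ∈ s, 0 ≤ f p + f (σ p)) : 0 ≤ ∑ p ∈ s, f p := by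
  have h_comp : ∑ p ∈ s, f (σ p) = ∑ p ∈ s, f p := sum_nbij' σ σ hσ hσ hσσ hσσ fun _ _ => rfl
  rw [← nsmul_nonneg_iff two_ne_zero, two_nsmul]
  nth_rewrite 2 [← h_comp]
  rw [← sum_add_distrib]
  exact sum_nonneg h

section ExtendByZero

variable {M : Type*} [Zero M]

noncomputable def extendByZero (a : ℕ → M) : ℤ → M :=
  Function.extend ((↑) : ℕ → ℤ) a 0

@[simp]
theorem extendByZero_natCast (a : ℕ → M) (n : ℕ) : extendByZero a n = a n :=
  Nat.cast_injective.extend_apply a 0 n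

theorem extendByZero_of_neg (a : ℕ → M) {i : ℤ} (hi : i < 0) : extendByZero a i = 0 :=
  extend_apply' _ _ _ (by rintro ⟨n, rfl⟩; omega)

theorem support_extendByZero_subset {a : ℕ → M} {m : ℕ} (ha_zero : ∀ i, m < i → a i = 0) :
    support (extendByZero a) ⊆ Set.Icc 0 m := by
  intro i hi
  rw [mem_support] at hi
  by_contra h
  rcases lt_or_ge i 0 with hneg | hnonneg
  · exact hi (extendByZero_of_neg a hneg)
  · lift i to ℕ using hnonneg
    exact hi (by rw [extendByZero_natCast, ha_zero i (by simpa using h)])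

end ExtendByZero

section Convolution

variable {R : Type*} [CommRing R]

-- Only meaningful for finitely supported `A * B (n - ·)`: otherwise `finsum` returns `0`.
noncomputable def conv (A B : ℤ → R) (n : ℤ) : R := ∑ᶠ i, A i * B (n - i)

theorem conv_sub_one (A B : ℤ → R) (n : ℤ) :
    conv A B (n - 1) = ∑ᶠ i, A (i - 1) * B (n - i) := by
  rw [conv, ← finsum_comp_equiv (Equiv.subRight 1)]
  exact finsum_congr fun i => by simp [sub_sub_sub_cancel_right]

theorem conv_add_one (A B : ℤ → R) (n : ℤ) :
    conv A B (n + 1) = ∑ᶠ i, A (i + 1) * B (n - i) := by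
  rw [conv, ← finsum_comp_equiv (Equiv.addRight 1)]
  exact finsum_congr fun i => by simp [add_sub_add_right_eq_sub]

theorem finsum_mul_eq_sum_Icc {f g : ℤ → R} {lo hi lo' hi' : ℤ} (hf : support f ⊆ Set.Icc lo hi)
    (hlo : lo' ≤ lo) (hhi : hi ≤ hi') : ∑ᶠ i, f i * g i = ∑ i ∈ Icc lo' hi', f i * g i :=
  finsum_eq_sum_of_support_subset _ <| (support_mul_subset_left f g).trans <|
    hf.trans <| by simpa using Set.Icc_subset_Icc hlo hhi

theorem sum_antidiagonal_eq_conv (a b : ℕ → R) (n : ℕ) :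
    ∑ ij ∈ antidiagonal n, a ij.1 * b ij.2 = conv (extendByZero a) (extendByZero b) n := by
  have h_supp : support (fun i => extendByZero a i * extendByZero b (n - i)) ⊆ Icc (0 : ℤ) n := by
    intro i hi
    rw [mem_support] at hi
    rw [coe_Icc, Set.mem_Icc]
    by_contra h
    rcases not_and_or.1 h with h | h
    · exact hi (by rw [extendByZero_of_neg a (not_le.1 h), zero_mul])
    · exact hi (by rw [extendByZero_of_neg b (by omega), mul_zero])
  rw [conv, finsum_eq_sum_of_support_subset _ h_supp, Int.Icc_eq_finset_map, sum_map,
    Nat.sum_antidiagonal_eq_sum_range_succ_mk]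
  simp only [sub_zero, Int.toNat_natCast_add_one, Embedding.trans_apply, Nat.castEmbedding_apply,
    addLeftEmbedding_apply, zero_add, extendByZero_natCast]
  refine sum_congr rfl fun k hk => ?_
  rw [← Nat.cast_sub (mem_range_succ_iff.1 hk), extendByZero_natCast]

def turanSummand (A B : ℤ → R) (r : ℤ) (p : ℤ × ℤ) : R :=
  (A p.1 * A p.2 - A (p.1 - 1) * A (p.2 + 1)) * (B (r - p.1) * B (r - p.2))

end Convolution

section LogConcave

variable {R : Type*} [CommRing R] [LinearOrder R]

-- For nonnegative sequences: log-concave with no internal zeros.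
def IsLogConcaveNoGaps (A : ℤ → R) : Prop :=
  ∀ x y, x ≤ y → A (x - 1) * A (y + 1) ≤ A x * A y

namespace IsLogConcaveNoGaps

variable {A B : ℤ → R}

theorem le_of_le_add_one (hA : IsLogConcaveNoGaps A) {x y : ℤ} (hxy : x ≤ y + 1) :
    A (x - 1) * A (y + 1) ≤ A x * A y := by
  rcases hxy.lt_or_eq with hlt | rfl
  · exact hA x y (by omega)
  · rw [add_sub_cancel_right, mul_comm]

theorem of_pos_on_Icc [IsStrictOrderedRing R] {lo hi : ℤ} (hpos : ∀ i ∈ Set.Icc lo hi, 0 < A i)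
    (hzero : ∀ i ∉ Set.Icc lo hi, A i = 0)
    (hlc : ∀ i ∈ Set.Ioo lo hi, A (i - 1) * A (i + 1) ≤ A i ^ 2) : IsLogConcaveNoGaps A := by
  have hnonneg : ∀ i, 0 ≤ A i := fun i => by
    by_cases hi : i ∈ Set.Icc lo hi
    · exact (hpos i hi).le
    · exact (hzero i hi).ge
  intro x y hxy
  by_cases hx : x - 1 < lo
  · rw [hzero (x - 1) (by rw [Set.mem_Icc]; omega), zero_mul]
    exact mul_nonneg (hnonneg x) (hnonneg y)
  by_cases hy : hi < y + 1
  · rw [hzero (y + 1) (by rw [Set.mem_Icc]; omega), mul_zero]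
    exact mul_nonneg (hnonneg x) (hnonneg y)
  induction y, hxy using Int.leInduction with
  | base => simpa only [sq] using hlc x (by rw [Set.mem_Ioo]; omega)
  | succ y hxy ih =>
    have h_prev : A (x - 1) * A (y + 1) ≤ A x * A y := ih (by omega)
    have h_step : A y * A (y + 1 + 1) ≤ A (y + 1) ^ 2 := by
      simpa only [add_sub_cancel_right] using hlc (y + 1) (by rw [Set.mem_Ioo]; omega)
    have hy₀ : 0 < A y := hpos y (by rw [Set.mem_Icc]; omega)
    have hy₁ : 0 < A (y + 1) := hpos (y + 1) (by rw [Set.mem_Icc]; omega)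
    refine le_of_mul_le_mul_right ?_ (mul_pos hy₀ hy₁)
    calc A (x - 1) * A (y + 1 + 1) * (A y * A (y + 1))
        = A (x - 1) * A (y + 1) * (A y * A (y + 1 + 1)) := by ring
      _ ≤ A x * A y * A (y + 1) ^ 2 :=
          mul_le_mul h_prev h_step (mul_nonneg (hnonneg _) (hnonneg _))
            (mul_nonneg (hnonneg _) (hnonneg _))
      _ = A x * A (y + 1) * (A y * A (y + 1)) := by ring

theorem turanSummand_add_turanSummand_nonneg [IsStrictOrderedRing R] (hA : IsLogConcaveNoGaps A)
    (hB : IsLogConcaveNoGaps B) (r i j : ℤ) :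
    0 ≤ turanSummand A B r (i, j) + turanSummand A B r (j + 1, i - 1) := by
  have h_factor : turanSummand A B r (i, j) + turanSummand A B r (j + 1, i - 1) =
      (A i * A j - A (i - 1) * A (j + 1)) *
        (B (r - j) * B (r - i) - B (r - j - 1) * B (r - i + 1)) := by
    simp only [turanSummand, add_sub_cancel_right, sub_add_cancel]
    ring_nf
  rw [h_factor]
  rcases le_or_gt i j with hij | hji
  · exact mul_nonneg (sub_nonneg.2 (hA i j hij)) (sub_nonneg.2 (hB (r - j) (r - i) (by omega)))
  · refine mul_nonneg_of_nonpos_of_nonpos (sub_nonpos.2 ?_) (sub_nonpos.2 ?_)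
    · simpa [mul_comm] using hA.le_of_le_add_one (x := j + 1) (y := i - 1) (by omega)
    · simpa [mul_comm] using hB.le_of_le_add_one (x := r - i + 1) (y := r - j - 1) (by omega)

theorem conv_sub_one_mul_conv_add_one_le_sq [IsStrictOrderedRing R] (hA : IsLogConcaveNoGaps A)
    (hB : IsLogConcaveNoGaps B) {lo hi : ℤ} (hA_supp : support A ⊆ Set.Icc lo hi) (r : ℤ) :
    conv A B (r - 1) * conv A B (r + 1) ≤ conv A B r ^ 2 := by
  have hA_pred : support (fun i => A (i - 1)) ⊆ Set.Icc (lo + 1) (hi + 1) := fun i hi' => by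
    have := hA_supp hi'; simp only [Set.mem_Icc] at *; omega
  have hA_succ : support (fun i => A (i + 1)) ⊆ Set.Icc (lo - 1) (hi - 1) := fun i hi' => by
    have := hA_supp hi'; simp only [Set.mem_Icc] at *; omega
  have h_diff : conv A B r ^ 2 - conv A B (r - 1) * conv A B (r + 1) =
      ∑ p ∈ Icc lo (hi + 1) ×ˢ Icc (lo - 1) hi, turanSummand A B r p := by
    rw [sq]
    nth_rewrite 1 [conv, finsum_mul_eq_sum_Icc hA_supp le_rfl (by omega : hi ≤ hi + 1)]
    rw [conv, finsum_mul_eq_sum_Icc hA_supp (by omega : lo - 1 ≤ lo) le_rfl,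
      conv_sub_one, finsum_mul_eq_sum_Icc hA_pred (by omega : lo ≤ lo + 1) le_rfl,
      conv_add_one, finsum_mul_eq_sum_Icc hA_succ le_rfl (by omega : hi - 1 ≤ hi),
      sum_mul_sum, sum_mul_sum, ← sum_sub_distrib, sum_product]
    refine sum_congr rfl fun i _ => ?_
    rw [← sum_sub_distrib]
    exact sum_congr rfl fun j _ => by rw [turanSummand]; ring
  rw [← sub_nonneg, h_diff]
  exact sum_nonneg_of_involution (fun p => (p.2 + 1, p.1 - 1))
    (fun p hp => by simp only [mem_product, mem_Icc] at hp ⊢; omega)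
    (fun p _ => by simp) (fun p _ => turanSummand_add_turanSummand_nonneg hA hB r p.1 p.2)

end IsLogConcaveNoGaps

theorem isLogConcaveNoGaps_extendByZero [IsStrictOrderedRing R] {a : ℕ → R} {m : ℕ}
    (ha_pos : ∀ i ≤ m, 0 < a i) (ha_zero : ∀ i, m < i → a i = 0)
    (ha_lc : ∀ i, 1 ≤ i → i + 1 ≤ m → a (i - 1) * a (i + 1) ≤ a i ^ 2) :
    IsLogConcaveNoGaps (extendByZero a) := by
  refine IsLogConcaveNoGaps.of_pos_on_Icc (lo := 0) (hi := m) ?_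
    (fun i hi => notMem_support.1 fun h => hi (support_extendByZero_subset ha_zero h)) ?_
  · rintro i ⟨h0, hm⟩
    lift i to ℕ using h0
    simpa using ha_pos i (by exact_mod_cast hm)
  · rintro i ⟨h0, hm⟩
    lift i to ℕ using h0.le
    have h1 : 1 ≤ i := by exact_mod_cast h0
    rw [← Nat.cast_pred h1, ← Nat.cast_add_one]
    simp only [extendByZero_natCast]
    exact ha_lc i h1 (by exact_mod_cast hm)

/-- The convolution of two log-concave sequences of positive reals is log-concave. -/
theorem convolution_log_concave (m k : ℕ) (a b : ℕ → ℝ)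
    (ha_pos : ∀ i ≤ m, 0 < a i) (ha_zero : ∀ i, m < i → a i = 0)
    (hb_pos : ∀ j ≤ k, 0 < b j) (hb_zero : ∀ j, k < j → b j = 0)
    (ha_lc : ∀ i, 1 ≤ i → i + 1 ≤ m → a (i - 1) * a (i + 1) ≤ a i ^ 2)
    (hb_lc : ∀ j, 1 ≤ j → j + 1 ≤ k → b (j - 1) * b (j + 1) ≤ b j ^ 2)
    (c : ℕ → ℝ)
    (hc : ∀ r, c r = ∑ ij ∈ Finset.HasAntidiagonal.antidiagonal r, a ij.1 * b ij.2) :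
    ∀ r, 1 ≤ r → r + 1 ≤ m + k → c (r - 1) * c (r + 1) ≤ c r ^ 2 := by
  intro r hr _
  have hc_conv : ∀ n : ℕ, c n = conv (extendByZero a) (extendByZero b) n :=
    fun n => (hc n).trans (sum_antidiagonal_eq_conv a b n)
  rw [hc_conv, hc_conv, hc_conv, Nat.cast_sub hr, Nat.cast_add, Nat.cast_one]
  exact (isLogConcaveNoGaps_extendByZero ha_pos ha_zero ha_lc).conv_sub_one_mul_conv_add_one_le_sq
    (isLogConcaveNoGaps_extendByZero hb_pos hb_zero hb_lc) (support_extendByZero_subset ha_zero) r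
end LogConcave
end

section
/- The map t ↦ (x(t), y(t)) with x(t) = 2(-3 - 2t + 2t³ + 3t⁴)/(5 + 12t + 30t² + 12t³ + 5t⁴) and y(t) = -2(-1 - 6t + 6t³ + t⁴)/(5 + 12t + 30t² + 12t³ + 5t⁴) satisfies (x(t)² + y(t)²)² - 2(x(t)² - y(t)²) = 0 whenever the denominator is nonzero. -/
/-! Clearing the common denominator `d`, the lemniscate equation for `(a / d, b / d)` becomes
the homogeneous identity `(a² + b²)² = 2 (a² - b²) d²`, which for the given quartic numerators and
denominator is a polynomial identity in `t`. -/

/-- When `d = 0` both quotients are the junk value `0`, and `(0, 0)` lies on the lemniscate. -/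
theorem lemniscate_div_of_homogeneous {K : Type*} [Field K] {a b d : K}
    (h : (a ^ 2 + b ^ 2) ^ 2 = 2 * (a ^ 2 - b ^ 2) * d ^ 2) :
    ((a / d) ^ 2 + (b / d) ^ 2) ^ 2 - 2 * ((a / d) ^ 2 - (b / d) ^ 2) = 0 := by
  rcases eq_or_ne d 0 with rfl | hd
  · simp
  · field_simp
    linear_combination h

theorem lemniscate_parametrization_general (t x y : ℂ)
    (hx : x = 2 * (-3 - 2 * t + 2 * t ^ 3 + 3 * t ^ 4) /
      (5 + 12 * t + 30 * t ^ 2 + 12 * t ^ 3 + 5 * t ^ 4))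
    (hy : y = -2 * (-1 - 6 * t + 6 * t ^ 3 + t ^ 4) /
      (5 + 12 * t + 30 * t ^ 2 + 12 * t ^ 3 + 5 * t ^ 4)) :
    (x ^ 2 + y ^ 2) ^ 2 - 2 * (x ^ 2 - y ^ 2) = 0 := by
  subst hx hy
  exact lemniscate_div_of_homogeneous (by ring)

/-- Rational parametrization of the affine Lemniscate of Bernoulli
`(x² + y²)² - 2(x² - y²) = 0`. -/
theorem lemniscate_parametrization (t x y : ℂ)
    (ht : 5 + 12 * t + 30 * t ^ 2 + 12 * t ^ 3 + 5 * t ^ 4 ≠ 0)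
    (hx : x = 2 * (-3 - 2 * t + 2 * t ^ 3 + 3 * t ^ 4) /
      (5 + 12 * t + 30 * t ^ 2 + 12 * t ^ 3 + 5 * t ^ 4))
    (hy : y = -2 * (-1 - 6 * t + 6 * t ^ 3 + t ^ 4) /
      (5 + 12 * t + 30 * t ^ 2 + 12 * t ^ 3 + 5 * t ^ 4)) :
    (x ^ 2 + y ^ 2) ^ 2 - 2 * (x ^ 2 - y ^ 2) = 0 :=
  lemniscate_parametrization_general t x y hx hy
end

section
/- For the Lemniscate of Bernoulli f = (x²+y²)² - 2(x²-y²)z², the following three syzygies among the partial derivatives hold identically: (2y³+yz²)f_x + (xz² - 2xy²)f_y + 2xyz·f_z = 0; (2xy²+xz²)f_x + (yz²-2x²y)f_y + (x²z - y²z - z³)f_z = 0; and (2x²y+yz²)f_x + (xz²-2x³)f_y - 2xyz·f_z = 0. -/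
open MvPolynomial

noncomputable def lemniscate (R : Type*) [CommRing R] : MvPolynomial (Fin 3) R :=
  (X 0 ^ 2 + X 1 ^ 2) ^ 2 - 2 * (X 0 ^ 2 - X 1 ^ 2) * X 2 ^ 2

section
variable {R : Type*} [CommRing R]

@[simp]
theorem MvPolynomial.pderiv_ofNat {σ : Type*} (i : σ) (n : ℕ) [n.AtLeastTwo] :
    pderiv i (ofNat(n) : MvPolynomial σ R) = 0 := by
  rw [← Nat.cast_ofNat, Derivation.map_natCast]

theorem pderiv_zero_lemniscate :
    pderiv 0 (lemniscate R) = 4 * X 0 ^ 3 + 4 * X 0 * X 1 ^ 2 - 4 * X 0 * X 2 ^ 2 := by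
  simp only [lemniscate, map_add, map_sub, Derivation.leibniz, Derivation.leibniz_pow, pderiv_X,
    pderiv_ofNat, Pi.single_apply, Fin.reduceEq, if_true, if_false, smul_eq_mul, nsmul_eq_mul]
  ring

theorem pderiv_one_lemniscate :
    pderiv 1 (lemniscate R) = 4 * X 1 ^ 3 + 4 * X 0 ^ 2 * X 1 + 4 * X 1 * X 2 ^ 2 := by
  simp only [lemniscate, map_add, map_sub, Derivation.leibniz, Derivation.leibniz_pow, pderiv_X,
    pderiv_ofNat, Pi.single_apply, Fin.reduceEq, if_true, if_false, smul_eq_mul, nsmul_eq_mul]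
  ring

theorem pderiv_two_lemniscate :
    pderiv 2 (lemniscate R) = -4 * (X 0 ^ 2 - X 1 ^ 2) * X 2 := by
  simp only [lemniscate, map_add, map_sub, Derivation.leibniz, Derivation.leibniz_pow, pderiv_X,
    pderiv_ofNat, Pi.single_apply, Fin.reduceEq, if_true, if_false, smul_eq_mul, nsmul_eq_mul]
  ring

theorem lemniscate_pderiv_syzygies :
    let fx := pderiv 0 (lemniscate R)
    let fy := pderiv 1 (lemniscate R)
    let fz := pderiv 2 (lemniscate R)
    (2 * X 1 ^ 3 + X 1 * X 2 ^ 2) * fx + (X 0 * X 2 ^ 2 - 2 * X 0 * X 1 ^ 2) * fy +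
        2 * X 0 * X 1 * X 2 * fz = 0 ∧
    (2 * X 0 * X 1 ^ 2 + X 0 * X 2 ^ 2) * fx + (X 1 * X 2 ^ 2 - 2 * X 0 ^ 2 * X 1) * fy +
        (X 0 ^ 2 * X 2 - X 1 ^ 2 * X 2 - X 2 ^ 3) * fz = 0 ∧
    (2 * X 0 ^ 2 * X 1 + X 1 * X 2 ^ 2) * fx + (X 0 * X 2 ^ 2 - 2 * X 0 ^ 3) * fy -
        2 * X 0 * X 1 * X 2 * fz = 0 := by
  simp only [pderiv_zero_lemniscate, pderiv_one_lemniscate, pderiv_two_lemniscate]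
  refine ⟨?_, ?_, ?_⟩ <;> ring

end

/-- Three syzygies of degree 3 among the partial derivatives of the
Lemniscate of Bernoulli `f = (x²+y²)² - 2(x²-y²)z²`. -/
theorem lemniscate_syzygies :
    let x : MvPolynomial (Fin 3) ℂ := X 0
    let y : MvPolynomial (Fin 3) ℂ := X 1
    let z : MvPolynomial (Fin 3) ℂ := X 2
    let f := (x ^ 2 + y ^ 2) ^ 2 - 2 * (x ^ 2 - y ^ 2) * z ^ 2
    let fx := pderiv 0 f
    let fy := pderiv 1 f
    let fz := pderiv 2 f
    (2 * y ^ 3 + y * z ^ 2) * fx + (x * z ^ 2 - 2 * x * y ^ 2) * fy +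
        2 * x * y * z * fz = 0 ∧
    (2 * x * y ^ 2 + x * z ^ 2) * fx + (y * z ^ 2 - 2 * x ^ 2 * y) * fy +
        (x ^ 2 * z - y ^ 2 * z - z ^ 3) * fz = 0 ∧
    (2 * x ^ 2 * y + y * z ^ 2) * fx + (x * z ^ 2 - 2 * x ^ 3) * fy -
        2 * x * y * z * fz = 0 := by
  exact lemniscate_pderiv_syzygies
end

section
/- For the Cardioid f = (x²+y²+xz)² - (x²+y²)z², the following three syzygies hold identically: (xz - 6y²)f_x + (6xy + 3yz)f_y - (3z² + 2xz)f_z = 0; (yz - 3xy)f_x + 3x²·f_y + yz·f_z = 0; and (xz - 2x² - 2y²)f_x + 3yz·f_y + (4x² + 4y² + 4xz - 3z²)f_z = 0. -/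
open MvPolynomial

section Cardioid

variable {R : Type*} [CommRing R]

noncomputable def cardioid : MvPolynomial (Fin 3) R :=
  (X 0 ^ 2 + X 1 ^ 2 + X 0 * X 2) ^ 2 - (X 0 ^ 2 + X 1 ^ 2) * X 2 ^ 2

theorem pderiv_zero_cardioid :
    pderiv 0 (cardioid : MvPolynomial (Fin 3) R) =
      2 * (X 0 ^ 2 + X 1 ^ 2 + X 0 * X 2) * (2 * X 0 + X 2) - 2 * X 0 * X 2 ^ 2 := by
  simp only [cardioid, map_sub, map_add, Derivation.leibniz, Derivation.leibniz_pow, pderiv_X,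
    Pi.single_apply, Fin.reduceEq, if_true, if_false, smul_eq_mul, nsmul_eq_mul]
  ring

theorem pderiv_one_cardioid :
    pderiv 1 (cardioid : MvPolynomial (Fin 3) R) =
      4 * (X 0 ^ 2 + X 1 ^ 2 + X 0 * X 2) * X 1 - 2 * X 1 * X 2 ^ 2 := by
  simp only [cardioid, map_sub, map_add, Derivation.leibniz, Derivation.leibniz_pow, pderiv_X,
    Pi.single_apply, Fin.reduceEq, if_true, if_false, smul_eq_mul, nsmul_eq_mul]
  ring

theorem pderiv_two_cardioid :
    pderiv 2 (cardioid : MvPolynomial (Fin 3) R) =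
      2 * (X 0 ^ 2 + X 1 ^ 2 + X 0 * X 2) * X 0 - 2 * (X 0 ^ 2 + X 1 ^ 2) * X 2 := by
  simp only [cardioid, map_sub, map_add, Derivation.leibniz, Derivation.leibniz_pow, pderiv_X,
    Pi.single_apply, Fin.reduceEq, if_true, if_false, smul_eq_mul, nsmul_eq_mul]
  ring

end Cardioid

/-- Three syzygies of degree 2 among the partial derivatives of the
Cardioid `f = (x²+y²+xz)² - (x²+y²)z²`. -/
theorem cardioid_syzygies :
    let x : MvPolynomial (Fin 3) ℂ := X 0
    let y : MvPolynomial (Fin 3) ℂ := X 1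
    let z : MvPolynomial (Fin 3) ℂ := X 2
    let f := (x ^ 2 + y ^ 2 + x * z) ^ 2 - (x ^ 2 + y ^ 2) * z ^ 2
    let fx := pderiv 0 f
    let fy := pderiv 1 f
    let fz := pderiv 2 f
    (x * z - 6 * y ^ 2) * fx + (6 * x * y + 3 * y * z) * fy -
        (3 * z ^ 2 + 2 * x * z) * fz = 0 ∧
    (y * z - 3 * x * y) * fx + 3 * x ^ 2 * fy + y * z * fz = 0 ∧
    (x * z - 2 * x ^ 2 - 2 * y ^ 2) * fx + 3 * y * z * fy +
        (4 * x ^ 2 + 4 * y ^ 2 + 4 * x * z - 3 * z ^ 2) * fz = 0 := by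
  intro x y z f fx fy fz
  have hfx : fx = 2 * (x ^ 2 + y ^ 2 + x * z) * (2 * x + z) - 2 * x * z ^ 2 :=
    pderiv_zero_cardioid
  have hfy : fy = 4 * (x ^ 2 + y ^ 2 + x * z) * y - 2 * y * z ^ 2 := pderiv_one_cardioid
  have hfz : fz = 2 * (x ^ 2 + y ^ 2 + x * z) * x - 2 * (x ^ 2 + y ^ 2) * z :=
    pderiv_two_cardioid
  rw [hfx, hfy, hfz]
  exact ⟨by ring, by ring, by ring⟩
end
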